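/- For a discrete-time Markov chain on a countable state space, if state j is positive recurrent, then for every state i, lim_{n→∞} (1/n) ∑_{k=1}^n P^k_{ij} = f_{ij} / m_j, where f_{ij} is the probability of ever reaching j from i and m_j is the mean return time to j. -/

import Mathlib

set_option linter.unusedSectionVars false
set_option maxHeartbeats 1000000

open MeasureTheory Filter Topology
open scoped ENNReal NNReal

variable {S : Type*} [Countable S] [DecidableEq S]

/-- k-step transition probabilities of a transition matrix `P`. -/
noncomputable def kstep (P : S → S → ℝ) : ℕ → S → S → ℝ
  | 0 => fun i j => if i = j then 1 else 0
  | (k+1) => fun i j => ∑' l, kstep P k i l * P l j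

/-- first passage probabilities `f^{(n)}_{ij}` (first visit to `j` at time exactly `n`). -/
noncomputable def fpass (P : S → S → ℝ) (j : S) : ℕ → S → ℝ
  | 0 => fun _ => 0
  | 1 => fun i => P i j
  | (n+2) => fun i => ∑' l, if l = j then 0 else P i l * fpass P j (n+1) l

/-- probability `f_{ij}` of ever reaching `j` from `i`. -/
noncomputable def hitProb (P : S → S → ℝ) (i j : S) : ℝ := ∑' n, fpass P j n i

/-- mean return time `m_j` to `j` (in `ℝ≥0∞`). -/
noncomputable def meanReturn (P : S → S → ℝ) (j : S) : ℝ≥0∞ :=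
  ∑' n : ℕ, (n : ℝ≥0∞) * ENNReal.ofReal (fpass P j n j)

def PositiveRecurrent (P : S → S → ℝ) (j : S) : Prop :=
  hitProb P j j = 1 ∧ meanReturn P j < ⊤

def NullRecurrent (P : S → S → ℝ) (j : S) : Prop :=
  hitProb P j j = 1 ∧ meanReturn P j = ⊤

def Transient (P : S → S → ℝ) (j : S) : Prop := hitProb P j j < 1

/-- `X` is a time-homogeneous Markov chain on `(Ω, μ)` with transition matrix `P`. -/
structure IsMarkovChain {Ω : Type*} [MeasurableSpace Ω] [MeasurableSpace S] (μ : Measure Ω)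
    (X : ℕ → Ω → S) (P : S → S → ℝ) : Prop where
  isProb : IsProbabilityMeasure μ
  meas : ∀ n, Measurable (X n)
  nonneg : ∀ i j, 0 ≤ P i j
  rowSum : ∀ i, ∑' j, P i j = 1
  markov : ∀ n (j : S) (f : ℕ → S),
    μ ({ω | X (n+1) ω = j} ∩ {ω | ∀ m ≤ n, X m ω = f m})
      = ENNReal.ofReal (P (f n) j) * μ {ω | ∀ m ≤ n, X m ω = f m}

/-- `M_j(n)`: number of visits to `j` at times `1,…,n`. -/
noncomputable def visits {Ω : Type*} (X : ℕ → Ω → S) (j : S) (n : ℕ) (ω : Ω) : ℝ :=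
  ∑ k ∈ Finset.Icc 1 n, if X k ω = j then (1:ℝ) else 0

noncomputable def QE (P : S → S → ℝ) (i j : S) : ℝ≥0∞ := ENNReal.ofReal (P i j)

noncomputable def kE (P : S → S → ℝ) : ℕ → S → S → ℝ≥0∞
  | 0 => fun i j => if i = j then 1 else 0
  | (k+1) => fun i j => ∑' l, kE P k i l * QE P l j

noncomputable def fE (P : S → S → ℝ) (j : S) : ℕ → S → ℝ≥0∞
  | 0 => fun _ => 0
  | 1 => fun i => QE P i j
  | (n+2) => fun i => ∑' l, if l = j then 0 else QE P i l * fE P j (n+1) l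

section Layer1
variable {P : S → S → ℝ} (hP0 : ∀ i j, 0 ≤ P i j) (hP1 : ∀ i, ∑' j, P i j = 1)
include hP0 hP1

theorem summable_row (i : S) : Summable (P i) := by
  by_contra h
  have := tsum_eq_zero_of_not_summable h
  rw [hP1 i] at this; norm_num at this

theorem rowE (i : S) : ∑' j, QE P i j = 1 := by
  rw [show (1:ℝ≥0∞) = ENNReal.ofReal 1 by simp, ← hP1 i,
    ENNReal.ofReal_tsum_of_nonneg (hP0 i) (summable_row hP0 hP1 i)]
  rfl

theorem QE_le_one (i j : S) : QE P i j ≤ 1 := by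
  rw [← rowE hP0 hP1 i]
  exact ENNReal.le_tsum j

theorem kE_row (n : ℕ) (i : S) : ∑' l, kE P n i l = 1 := by
  induction n generalizing i with
  | zero =>
    simp only [kE]
    rw [tsum_eq_single i (fun b hb => if_neg (Ne.symm hb))]
    simp
  | succ n ih =>
    simp only [kE]
    rw [ENNReal.tsum_comm]
    calc ∑' l, ∑' j, kE P n i l * QE P l j
        = ∑' l, kE P n i l * ∑' j, QE P l j := by
          congr 1; ext l; rw [ENNReal.tsum_mul_left]
      _ = 1 := by simp only [rowE hP0 hP1, mul_one]; exact ih i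

theorem kE_le_one (n : ℕ) (i j : S) : kE P n i j ≤ 1 := by
  rw [← kE_row hP0 hP1 n i]; exact ENNReal.le_tsum j

theorem kE_ne_top (n : ℕ) (i j : S) : kE P n i j ≠ ⊤ :=
  ne_top_of_le_ne_top ENNReal.one_ne_top (kE_le_one hP0 hP1 n i j)

theorem kstep_eq (n : ℕ) (i j : S) : kstep P n i j = (kE P n i j).toReal := by
  induction n generalizing i j with
  | zero => simp only [kstep, kE]; split <;> simp
  | succ n ih =>
    simp only [kstep, kE]
    rw [ENNReal.tsum_toReal_eq (f := fun l => kE P n i l * QE P l j)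
      (fun l => ENNReal.mul_ne_top (kE_ne_top hP0 hP1 n i l) ENNReal.ofReal_ne_top)]
    congr 1; ext l
    rw [ENNReal.toReal_mul, ih, QE, ENNReal.toReal_ofReal (hP0 l j)]

theorem kE_zero_self (j : S) : kE P 0 j j = 1 := by simp [kE]

theorem firststep (n : ℕ) (i j : S) :
    kE P (n+1) i j = ∑' l, QE P i l * kE P n l j := by
  induction n generalizing i j with
  | zero =>
    simp only [kE]
    rw [tsum_eq_single i (fun b hb => by simp [kE, Ne.symm hb]),
      tsum_eq_single j (fun b hb => by simp [kE, hb])]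
    simp [kE]
  | succ n ih =>
    show (∑' l, kE P (n+1) i l * QE P l j) = _
    calc ∑' l, kE P (n+1) i l * QE P l j
        = ∑' l, (∑' m, QE P i m * kE P n m l) * QE P l j := by
          congr 1; ext l; rw [ih]
      _ = ∑' l, ∑' m, QE P i m * kE P n m l * QE P l j := by
          congr 1; ext l; rw [ENNReal.tsum_mul_right]
      _ = ∑' m, ∑' l, QE P i m * (kE P n m l * QE P l j) := by
          rw [ENNReal.tsum_comm]; congr 1; ext l; congr 1; ext m; ring
      _ = ∑' m, QE P i m * kE P (n+1) m j := by
          congr 1; ext m; rw [ENNReal.tsum_mul_left]; rfl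

theorem fE_succ_succ (j : S) (n : ℕ) (i : S) :
    fE P j (n+2) i = ∑' l, (if l = j then 0 else QE P i l) * fE P j (n+1) l := by
  show (∑' l, if l = j then 0 else QE P i l * fE P j (n+1) l) = _
  congr 1; ext l; split <;> simp

theorem fE_partial_le_one (N : ℕ) (i : S) (j : S) :
    ∑ k ∈ Finset.Icc 1 N, fE P j k i ≤ 1 := by
  induction N generalizing i with
  | zero => simp
  | succ N ih =>
    rcases Nat.eq_zero_or_pos N with rfl | hN
    · simpa [fE] using QE_le_one hP0 hP1 i j
    -- split off k = 1
    have h1 : ∑ k ∈ Finset.Icc 1 (N+1), fE P j k i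
        = fE P j 1 i + ∑ k ∈ Finset.Icc 1 N, fE P j (k+1) i := by
      have he : Finset.Icc 1 (N+1)
          = insert 1 ((Finset.Icc 1 N).map (addRightEmbedding 1)) := by
        rw [Finset.map_add_right_Icc]
        ext x; simp; omega
      rw [he, Finset.sum_insert (by simp), Finset.sum_map]
      rfl
    rw [h1]
    have h2 : ∀ k ∈ Finset.Icc 1 N, fE P j (k+1) i
        = ∑' l, (if l = j then 0 else QE P i l) * fE P j k l := by
      intro k hk
      simp only [Finset.mem_Icc] at hk
      obtain ⟨k, rfl⟩ : ∃ m, k = m + 1 := ⟨k - 1, by omega⟩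
      exact fE_succ_succ hP0 hP1 j k i
    rw [Finset.sum_congr rfl h2, ← Summable.tsum_finsetSum (fun _ _ => ENNReal.summable)]
    have h3 : ∑' l, ∑ k ∈ Finset.Icc 1 N, (if l = j then 0 else QE P i l) * fE P j k l
        ≤ ∑' l, (if l = j then 0 else QE P i l) := by
      apply ENNReal.tsum_le_tsum
      intro l
      rw [← Finset.mul_sum]
      calc (if l = j then 0 else QE P i l) * ∑ k ∈ Finset.Icc 1 N, fE P j k l
          ≤ (if l = j then 0 else QE P i l) * 1 := by
            exact mul_le_mul_right (ih l) _
        _ = _ := mul_one _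
    calc fE P j 1 i + ∑' l, ∑ k ∈ Finset.Icc 1 N, (if l = j then 0 else QE P i l) * fE P j k l
        ≤ QE P i j + ∑' l, (if l = j then 0 else QE P i l) := add_le_add_right h3 _
      _ = ∑' l, QE P i l := by rw [ENNReal.tsum_eq_add_tsum_ite (f := QE P i) j]; congr 1; exact tsum_congr fun l => by congr
      _ = 1 := rowE hP0 hP1 i

theorem fE_tsum_le_one (i j : S) : ∑' n, fE P j n i ≤ 1 := by
  refine ENNReal.tsum_le_of_sum_range_le ?_
  intro n
  match n with
  | 0 => simp
  | (N+1) =>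
    have he : Finset.range (N+1+1-1) = insert 0 (Finset.Icc 1 N) := by ext x; simp; omega
    rw [show Finset.range (N+1) = Finset.range (N+1+1-1) from rfl, he,
      Finset.sum_insert (by simp)]
    simpa [fE] using fE_partial_le_one hP0 hP1 N i j

theorem fE_le_one (n : ℕ) (i j : S) : fE P j n i ≤ 1 :=
  le_trans (ENNReal.le_tsum n) (fE_tsum_le_one hP0 hP1 i j)

theorem fE_ne_top (n : ℕ) (i j : S) : fE P j n i ≠ ⊤ :=
  ne_top_of_le_ne_top ENNReal.one_ne_top (fE_le_one hP0 hP1 n i j)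

theorem fpass_eq (n : ℕ) (i j : S) : fpass P j n i = (fE P j n i).toReal := by
  induction n using Nat.strong_induction_on generalizing i with
  | _ n ih =>
    match n with
    | 0 => simp [fpass, fE]
    | 1 => simp [fpass, fE, QE, ENNReal.toReal_ofReal (hP0 i j)]
    | (n+2) =>
      show (∑' l, if l = j then 0 else P i l * fpass P j (n+1) l) = _
      rw [show fE P j (n+2) i = ∑' l, if l = j then 0 else QE P i l * fE P j (n+1) l from rfl]
      rw [ENNReal.tsum_toReal_eq (f := fun l => if l = j then 0 else QE P i l * fE P j (n+1) l)
        (fun l => by split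
                     · simp
                     · exact ENNReal.mul_ne_top ENNReal.ofReal_ne_top (fE_ne_top hP0 hP1 _ _ _))]
      congr 1; ext l
      split
      · simp
      · rw [ENNReal.toReal_mul, ih (n+1) (by omega), QE, ENNReal.toReal_ofReal (hP0 i l)]

theorem tsum_split (f : S → ℝ≥0∞) (j : S) :
    ∑' l, f l = f j + ∑' l, (if l = j then 0 else f l) := by
  rw [ENNReal.tsum_eq_add_tsum_ite j]
  congr 1
  exact tsum_congr fun l => by congr

theorem renewalE (j : S) : ∀ n i, kE P (n+1) i j
    = ∑ k ∈ Finset.Icc 1 (n+1), fE P j k i * kE P (n+1-k) j j := by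
  intro n
  induction n using Nat.strong_induction_on with
  | _ n ih =>
    intro i
    match n with
    | 0 =>
      have h1 : kE P 1 i j = QE P i j := by
        show (∑' l, kE P 0 i l * QE P l j) = _
        rw [tsum_eq_single i (fun b hb => by simp [kE, Ne.symm hb])]
        simp [kE]
      rw [h1]
      rw [show Finset.Icc 1 1 = {1} from rfl, Finset.sum_singleton,
        kE_zero_self hP0 hP1, mul_one]
      rfl
    | (n+1) =>
      rw [firststep hP0 hP1, tsum_split hP0 hP1 (fun l => QE P i l * kE P (n+1) l j) j]
      have hsplit : ∀ l : S, (if l = j then 0 else QE P i l * kE P (n+1) l j)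
          = ∑ k ∈ Finset.Icc 1 (n+1),
              ((if l = j then 0 else QE P i l) * fE P j k l) * kE P (n+1-k) j j := by
        intro l
        by_cases hl : l = j
        · simp [hl]
        · simp only [if_neg hl]
          rw [ih n (by omega) l, Finset.mul_sum]
          exact Finset.sum_congr rfl fun k hk => by ring
      have h2 : (∑' l, (if l = j then 0 else QE P i l * kE P (n+1) l j))
          = ∑ k ∈ Finset.Icc 1 (n+1), fE P j (k+1) i * kE P (n+1-k) j j := by
        rw [tsum_congr hsplit, Summable.tsum_finsetSum (fun _ _ => ENNReal.summable)]
        refine Finset.sum_congr rfl fun k hk => ?_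
        rw [ENNReal.tsum_mul_right]
        simp only [Finset.mem_Icc] at hk
        obtain ⟨m, rfl⟩ : ∃ m, k = m + 1 := ⟨k - 1, by omega⟩
        rw [fE_succ_succ hP0 hP1]
      rw [h2]
      have he : Finset.Icc 1 (n+2)
          = insert 1 ((Finset.Icc 1 (n+1)).map (addRightEmbedding 1)) := by
        rw [Finset.map_add_right_Icc]
        ext x; simp; omega
      rw [he, Finset.sum_insert (by simp), Finset.sum_map]
      congr 1
      refine Finset.sum_congr rfl fun k hk => ?_
      simp only [Finset.mem_Icc] at hk
      simp only [addRightEmbedding_apply]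
      congr 2
      omega

theorem kstep_nonneg (n : ℕ) (i j : S) : 0 ≤ kstep P n i j := by
  rw [kstep_eq hP0 hP1]; exact ENNReal.toReal_nonneg

theorem kstep_le_one (n : ℕ) (i j : S) : kstep P n i j ≤ 1 := by
  rw [kstep_eq hP0 hP1]
  have := ENNReal.toReal_mono (a := kE P n i j) ENNReal.one_ne_top (kE_le_one hP0 hP1 n i j)
  simpa using this

theorem kstep_zero_self (j : S) : kstep P 0 j j = 1 := by simp [kstep]

theorem fpass_nonneg (n : ℕ) (i j : S) : 0 ≤ fpass P j n i := by
  rw [fpass_eq hP0 hP1]; exact ENNReal.toReal_nonneg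

theorem fpass_zero (i j : S) : fpass P j 0 i = 0 := rfl

theorem renewalR (j : S) (n : ℕ) (hn : 1 ≤ n) (i : S) :
    kstep P n i j = ∑ k ∈ Finset.Icc 1 n, fpass P j k i * kstep P (n-k) j j := by
  obtain ⟨m, rfl⟩ : ∃ m, n = m + 1 := ⟨n - 1, by omega⟩
  rw [kstep_eq hP0 hP1, renewalE hP0 hP1,
    ENNReal.toReal_sum (fun k _ => ENNReal.mul_ne_top (fE_ne_top hP0 hP1 _ _ _)
      (kE_ne_top hP0 hP1 _ _ _))]
  exact Finset.sum_congr rfl fun k _ => by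
    rw [ENNReal.toReal_mul, fpass_eq hP0 hP1, kstep_eq hP0 hP1]

theorem summable_fpass (i j : S) : Summable (fun n => fpass P j n i) := by
  have : (fun n => fpass P j n i) = fun n => (fE P j n i).toReal := funext fun n =>
    fpass_eq hP0 hP1 n i j
  rw [this]
  exact ENNReal.summable_toReal (ne_top_of_le_ne_top ENNReal.one_ne_top
    (fE_tsum_le_one hP0 hP1 i j))

theorem hitProb_le_one (i j : S) : (∑' n, fpass P j n i) ≤ 1 := by
  have h1 : (∑' n, fpass P j n i) = (∑' n, fE P j n i).toReal := by
    rw [ENNReal.tsum_toReal_eq (fun n => fE_ne_top hP0 hP1 n i j)]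
    exact tsum_congr fun n => fpass_eq hP0 hP1 n i j
  rw [h1]
  have := ENNReal.toReal_mono (a := ∑' n, fE P j n i) ENNReal.one_ne_top
    (fE_tsum_le_one hP0 hP1 i j)
  simpa using this

theorem ofReal_fpass (n : ℕ) (i j : S) : ENNReal.ofReal (fpass P j n i) = fE P j n i := by
  rw [fpass_eq hP0 hP1, ENNReal.ofReal_toReal (fE_ne_top hP0 hP1 n i j)]

theorem summable_mean (j : S) (hm : (∑' n : ℕ, (n : ℝ≥0∞) * ENNReal.ofReal (fpass P j n j)) ≠ ⊤) :
    Summable (fun n : ℕ => (n : ℝ) * fpass P j n j)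
    ∧ (∑' n : ℕ, (n : ℝ) * fpass P j n j)
      = (∑' n : ℕ, (n : ℝ≥0∞) * ENNReal.ofReal (fpass P j n j)).toReal := by
  have hterm : ∀ n : ℕ, ((n : ℝ≥0∞) * ENNReal.ofReal (fpass P j n j)) ≠ ⊤ := fun n => by
    rw [ofReal_fpass hP0 hP1]
    exact ENNReal.mul_ne_top (ENNReal.natCast_ne_top n) (fE_ne_top hP0 hP1 n j j)
  have heq : (fun n : ℕ => (n : ℝ) * fpass P j n j)
      = fun n : ℕ => ((n : ℝ≥0∞) * ENNReal.ofReal (fpass P j n j)).toReal := by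
    funext n
    rw [ENNReal.toReal_mul, ENNReal.toReal_natCast,
      ENNReal.toReal_ofReal (fpass_nonneg hP0 hP1 n j j)]
  constructor
  · rw [heq]; exact ENNReal.summable_toReal hm
  · rw [heq, ENNReal.tsum_toReal_eq hterm]

end Layer1

section Renewal
variable (u f : ℕ → ℝ) (m : ℝ)

theorem cesaro_renewal
    (hu0 : u 0 = 1) (hu1 : ∀ n, u n ≤ 1) (hu_nn : ∀ n, 0 ≤ u n)
    (hf0 : f 0 = 0) (hf_nn : ∀ n, 0 ≤ f n)
    (hf_sum : Summable f) (hf_tsum : ∑' n, f n = 1)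
    (hg_sum : Summable (fun n : ℕ => (n : ℝ) * f n)) (hg_tsum : ∑' n : ℕ, (n : ℝ) * f n = m)
    (hren : ∀ n, 1 ≤ n → u n = ∑ k ∈ Finset.Icc 1 n, f k * u (n - k)) :
    Tendsto (fun N : ℕ => (∑ k ∈ Finset.range (N+1), u k) / N) atTop (𝓝 (1/m)) := by
  classical
  set F : ℕ → ℝ := fun n => ∑ k ∈ Finset.range (n+1), f k with hF
  set r : ℕ → ℝ := fun n => 1 - F n with hr
  set R : ℕ → ℝ := fun n => ∑ l ∈ Finset.range (n+1), r l with hR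
  set a : ℕ → ℝ := fun N => ∑ k ∈ Finset.range (N+1), u k with ha
  set G : ℕ → ℝ := fun n => ∑ k ∈ Finset.range (n+1), (k : ℝ) * f k with hG
  -- m ≥ 1
  have hm1 : 1 ≤ m := by
    rw [← hf_tsum, ← hg_tsum]
    refine Summable.tsum_le_tsum (fun n => ?_) hf_sum hg_sum
    match n with
    | 0 => simp [hf0]
    | (k+1) => nlinarith [hf_nn (k+1), (by exact_mod_cast Nat.one_le_iff_ne_zero.2 (Nat.succ_ne_zero k) : (1:ℝ) ≤ (k+1:ℕ))]
  have hm0 : 0 < m := by linarith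
  -- F is ≤ 1 and r ≥ 0
  have hF_le : ∀ n, F n ≤ 1 := fun n => by
    rw [← hf_tsum]; exact Summable.sum_le_tsum _ (fun k _ => hf_nn k) hf_sum
  have hr_nn : ∀ n, 0 ≤ r n := fun n => by simp [hr]; linarith [hF_le n]
  have hr0 : r 0 = 1 := by simp [hr, hF, hf0]
  have hrsucc : ∀ n, r (n+1) = r n - f (n+1) := fun n => by
    simp [hr, hF, Finset.sum_range_succ]; ring
  have hRsucc : ∀ n, R (n+1) = R n + r (n+1) := fun n => by
    simp [hR, Finset.sum_range_succ]
  have hR0 : R 0 = 1 := by simp [hR, hr0]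
  have hR_nn : ∀ n, 0 ≤ R n := fun n => Finset.sum_nonneg fun l _ => hr_nn l
  have hR_mono : Monotone R := by
    apply monotone_nat_of_le_succ
    intro n; rw [hRsucc]; linarith [hr_nn (n+1)]
  -- reindexed renewal
  have hren' : ∀ n : ℕ, ∑ k ∈ Finset.range (n+2), f (n+1-k) * u k = u (n+1) := by
    intro n
    have hrefl := Finset.sum_range_reflect (fun k => f (n+1-k) * u k) (n+2)
    rw [← hrefl]
    have hc : ∀ j ∈ Finset.range (n+2), f (n+1-(n+2-1-j)) * u (n+2-1-j)
        = f j * u (n+1-j) := by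
      intro j hj
      simp only [Finset.mem_range] at hj
      have e1 : n+1-(n+2-1-j) = j := by omega
      have e2 : n+2-1-j = n+1-j := by omega
      rw [e1, e2]
    rw [Finset.sum_congr rfl hc,
      show Finset.range (n+2) = insert 0 (Finset.Icc 1 (n+1)) by ext x; simp; omega,
      Finset.sum_insert (by simp), hf0, zero_mul, zero_add]
    exact (hren (n+1) (by omega)).symm
  -- key identity S
  have hS : ∀ n : ℕ, ∑ k ∈ Finset.range (n+1), r (n-k) * u k = 1 := by
    intro n
    induction n with
    | zero => simp [hr0, hu0]
    | succ n ihn =>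
      rw [Finset.sum_range_succ]
      have hstep : ∀ k ∈ Finset.range (n+1), r (n+1-k) * u k
          = r (n-k) * u k - f (n+1-k) * u k := by
        intro k hk
        simp only [Finset.mem_range] at hk
        rw [show n+1-k = (n-k)+1 by omega, hrsucc]
        ring
      rw [Finset.sum_congr rfl hstep, Finset.sum_sub_distrib, ihn]
      have hl := hren' n
      rw [Finset.sum_range_succ] at hl
      rw [show n+1-(n+1) = 0 by omega, hf0, zero_mul, add_zero] at hl
      rw [show n+1-(n+1) = 0 by omega, hr0]
      linarith
  -- summed identity T
  have hT : ∀ N : ℕ, ∑ k ∈ Finset.range (N+1), u k * R (N-k) = N + 1 := by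
    intro N
    induction N with
    | zero => simp [hR0, hu0]
    | succ N ihn =>
      rw [Finset.sum_range_succ]
      have hstep : ∀ k ∈ Finset.range (N+1), u k * R (N+1-k)
          = u k * R (N-k) + r (N+1-k) * u k := by
        intro k hk
        simp only [Finset.mem_range] at hk
        rw [show N+1-k = (N-k)+1 by omega, hRsucc]
        ring
      rw [Finset.sum_congr rfl hstep, Finset.sum_add_distrib, ihn]
      have hs := hS (N+1)
      rw [Finset.sum_range_succ] at hs
      rw [show N+1-(N+1) = 0 by omega, hr0] at hs
      rw [show N+1-(N+1) = 0 by omega, hR0]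
      push_cast
      linarith
  -- bounds on a
  have ha_nn : ∀ N, 0 ≤ a N := fun N => Finset.sum_nonneg fun k _ => hu_nn k
  have ha_le : ∀ N, a N ≤ N + 1 := by
    intro N
    calc a N ≤ ∑ k ∈ Finset.range (N+1), (1:ℝ) := Finset.sum_le_sum fun k _ => hu1 k
      _ = N + 1 := by simp
  have ha_mono : Monotone a := by
    apply monotone_nat_of_le_succ
    intro n
    rw [show a (n+1) = a n + u (n+1) by simp [ha, Finset.sum_range_succ]]
    linarith [hu_nn (n+1)]
  -- R in terms of G
  have hRG : ∀ n, R n = G (n+1) + ((n+1 : ℕ) : ℝ) * (1 - F (n+1)) := by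
    intro n
    induction n with
    | zero =>
      have e2 : G 1 = f 1 := by simp [hG, Finset.sum_range_succ, hf0]
      have e3 : F 1 = f 0 + f 1 := by
        simp [hF, Finset.sum_range_succ]
      rw [hR0, e2, e3, hf0]
      norm_num
    | succ n ihn =>
      have h4 : r (n+1) = 1 - F (n+1) := rfl
      have h1 : G (n+1+1) = G (n+1) + ((n+1+1 : ℕ) : ℝ) * f (n+1+1) := by
        simp only [hG, Finset.sum_range_succ]
      have h2 : F (n+1+1) = F (n+1) + f (n+1+1) := by
        simp only [hF, Finset.sum_range_succ]
      rw [hRsucc, ihn, h4, h1, h2]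
      push_cast
      ring
  -- G tends to m
  have hG_tend : Tendsto G atTop (𝓝 m) := by
    have h0 : Tendsto (fun n => ∑ k ∈ Finset.range n, (fun k : ℕ => (k:ℝ) * f k) k)
        atTop (𝓝 m) := by
      rw [← hg_tsum]
      exact hg_sum.hasSum.tendsto_sum_nat
    have := h0.comp (tendsto_add_atTop_nat 1)
    exact this
  -- tails
  have htailF : ∀ n : ℕ, 1 - F n = ∑' k : ℕ, f (k + (n+1)) := by
    intro n
    have := Summable.sum_add_tsum_nat_add (f := f) (n+1) hf_sum
    rw [hf_tsum] at this
    simp only [hF]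
    linarith
  have htailG : ∀ n : ℕ, m - G n = ∑' k : ℕ, ((k + (n+1) : ℕ) : ℝ) * f (k + (n+1)) := by
    intro n
    have := Summable.sum_add_tsum_nat_add (f := fun k : ℕ => (k:ℝ) * f k) (n+1) hg_sum
    rw [hg_tsum] at this
    simp only [hG]
    push_cast at this ⊢
    linarith
  -- R ≤ m
  have hR_le : ∀ n, R n ≤ m := by
    intro n
    rw [hRG n]
    have h1 : ((n+1 : ℕ):ℝ) * (1 - F (n+1)) ≤ m - G (n+1) := by
      rw [htailF, htailG]
      rw [← tsum_mul_left]
      refine Summable.tsum_le_tsum (fun k => ?_) ?_ ?_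
      · have h2 : ((n+1:ℕ):ℝ) ≤ ((k + (n+2) : ℕ):ℝ) := by exact_mod_cast by omega
        have := hf_nn (k + (n+2))
        have h3 : (k + (n+1+1)) = (k + (n+2)) := rfl
        rw [h3]
        nlinarith
      · exact ((summable_nat_add_iff (n+2)).2 hf_sum).mul_left _
      · have := (summable_nat_add_iff (n+2)).2 hg_sum
        exact this.congr (fun k => by push_cast; ring)
    linarith
  -- lower bound
  have hlow : ∀ N : ℕ, ((N:ℝ)+1)/m ≤ a N := by
    intro N
    rw [div_le_iff₀ hm0]
    have h1 : ((N:ℝ)+1) = ∑ k ∈ Finset.range (N+1), u k * R (N-k) := (hT N).symm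
    rw [h1, ha, Finset.sum_mul]
    refine Finset.sum_le_sum fun k _ => ?_
    have := hu_nn k
    have := hR_le (N-k)
    nlinarith
  -- increments
  have ha_inc : ∀ p d : ℕ, a (p + d) ≤ a p + d := by
    intro p d
    induction d with
    | zero => simp
    | succ d ihd =>
      have : a (p + d + 1) = a (p + d) + u (p + d + 1) := by
        simp [ha, Finset.sum_range_succ]
      rw [show p + (d+1) = p + d + 1 by omega, this]
      push_cast
      have := hu1 (p + d + 1)
      linarith
  -- upper bound
  have hup : ∀ (c' : ℝ) (L : ℕ), 0 < c' → c' ≤ R L → ∀ N, L ≤ N →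
      c' * a (N - L) ≤ (N:ℝ) + 1 := by
    intro c' L hc' hcL N hLN
    have h1 : ∑ k ∈ Finset.range (N-L+1), u k * R (N-k)
        ≤ ∑ k ∈ Finset.range (N+1), u k * R (N-k) := by
      refine Finset.sum_le_sum_of_subset_of_nonneg ?_ (fun k _ _ => ?_)
      · exact Finset.range_subset_range.2 (by omega)
      · exact mul_nonneg (hu_nn k) (hR_nn (N-k))
    have h2 : c' * a (N - L) ≤ ∑ k ∈ Finset.range (N-L+1), u k * R (N-k) := by
      rw [ha, Finset.mul_sum]
      refine Finset.sum_le_sum fun k hk => ?_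
      simp only [Finset.mem_range] at hk
      have hLk : L ≤ N - k := by omega
      have := hR_mono hLk
      have := hu_nn k
      nlinarith [hcL]
    rw [← hT N]
    linarith
  -- conclude
  rw [show (1:ℝ)/m = 1/m from rfl]
  refine tendsto_order.2 ⟨?_, ?_⟩
  · intro c hc
    filter_upwards [eventually_ge_atTop 1] with N hN
    have hN0 : (0:ℝ) < N := by exact_mod_cast hN
    have h1 : (1:ℝ)/m ≤ a N / N := by
      rw [div_le_div_iff₀ hm0 hN0]
      have h2 := hlow N
      rw [div_le_iff₀ hm0] at h2
      linarith
    linarith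
  · intro c hc
    have hm0' : (0:ℝ) < 1/m := by positivity
    have hc0 : 0 < c := lt_trans hm0' hc
    have h1c : 1/c < m := by
      have hc2 : 1/m < c := hc
      rw [div_lt_iff₀ hm0] at hc2
      rw [div_lt_iff₀ hc0]
      nlinarith
    set c' : ℝ := (m + 1/c)/2 with hc'def
    have hc'0 : 0 < c' := by positivity
    have hc'lt : 1/c < c' := by rw [hc'def]; linarith
    have hc'c : 1/c' < c := by
      rw [div_lt_iff₀ hc'0]
      rw [div_lt_iff₀ hc0] at hc'lt
      nlinarith
    have hc'm : c' < m := by rw [hc'def]; linarith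
    obtain ⟨L, hL₀⟩ := (hG_tend.eventually (eventually_gt_nhds hc'm)).exists_forall_of_atTop
    have hGR : G (L+1) ≤ R L := by
      have h4 := hRG L
      have h5 := hF_le (L+1)
      have h6 : (0:ℝ) ≤ ((L+1:ℕ):ℝ) := Nat.cast_nonneg _
      nlinarith
    have hRL : c' ≤ R L := le_trans (le_of_lt (hL₀ (L+1) (by omega))) hGR
    have hTt : Tendsto (fun N : ℕ => (1/c') * (1 + 1/(N:ℝ)) + L * (1/(N:ℝ))) atTop
        (𝓝 ((1/c') * (1 + 0) + L * 0)) :=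
      ((tendsto_const_nhds).mul ((tendsto_const_nhds).add
        tendsto_one_div_atTop_nhds_zero_nat)).add ((tendsto_const_nhds).mul
        tendsto_one_div_atTop_nhds_zero_nat)
    have hlim : (1/c') * (1 + 0) + (L:ℝ) * 0 = 1/c' := by ring
    rw [hlim] at hTt
    filter_upwards [eventually_ge_atTop (max L 1), hTt.eventually (eventually_lt_nhds hc'c)]
      with N hN1 hN2
    have hNL : L ≤ N := le_trans (le_max_left _ _) hN1
    have hN1' : 1 ≤ N := le_trans (le_max_right _ _) hN1
    have hN0 : (0:ℝ) < N := by exact_mod_cast hN1'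
    have h6 : a N ≤ ((N:ℝ)+1)/c' + L := by
      have h7 := hup c' L hc'0 hRL N hNL
      have h7' : a (N-L) ≤ ((N:ℝ)+1)/c' := by
        rw [le_div_iff₀ hc'0, mul_comm]
        exact h7
      have h8 : a N ≤ a (N - L) + L := by
        have := ha_inc (N - L) L
        rwa [show N - L + L = N by omega] at this
      linarith
    have h9 : a N / N ≤ (1/c') * (1 + 1/(N:ℝ)) + L * (1/(N:ℝ)) := by
      rw [div_le_iff₀ hN0]
      have he : ((1/c') * (1 + 1/(N:ℝ)) + L * (1/(N:ℝ))) * N = ((N:ℝ)+1)/c' + L := by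
        field_simp
      rw [he]
      exact h6
    exact lt_of_le_of_lt h9 hN2


end Renewal

theorem cesaro_hit
    (u g : ℕ → ℝ) (m fij : ℝ) (hm0 : 0 < m)
    (hu0 : u 0 = 1) (hu1 : ∀ n, u n ≤ 1) (hu_nn : ∀ n, 0 ≤ u n)
    (hg0 : g 0 = 0) (hg_nn : ∀ n, 0 ≤ g n) (hg_sum : Summable g)
    (hg_tsum : ∑' n, g n = fij)
    (v : ℕ → ℝ)
    (hren : ∀ n, 1 ≤ n → v n = ∑ k ∈ Finset.Icc 1 n, g k * u (n - k))
    (ha : Tendsto (fun N : ℕ => (∑ k ∈ Finset.range (N+1), u k) / N) atTop (𝓝 (1/m))) :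
    Tendsto (fun N : ℕ => (1/(N:ℝ)) * ∑ n ∈ Finset.Icc 1 N, v n) atTop (𝓝 (fij / m)) := by
  classical
  set a : ℕ → ℝ := fun M => ∑ k ∈ Finset.range (M+1), u k with hadef
  have ha_nn : ∀ M, 0 ≤ a M := fun M => Finset.sum_nonneg fun k _ => hu_nn k
  have ha_le : ∀ M : ℕ, a M ≤ M + 1 := by
    intro M
    calc a M ≤ ∑ k ∈ Finset.range (M+1), (1:ℝ) := Finset.sum_le_sum fun k _ => hu1 k
      _ = M + 1 := by simp
  have ha0 : a 0 = 1 := by simp [hadef, hu0]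
  have hsucc : ∀ M, a (M+1) = a M + u (M+1) := fun M => by
    simp [hadef, Finset.sum_range_succ]
  -- D identity
  have hD : ∀ N, ∑ n ∈ Finset.Icc 1 N, v n = ∑ k ∈ Finset.Icc 1 N, g k * a (N-k) := by
    intro N
    induction N with
    | zero => simp
    | succ N ihn =>
      have hsp : ∀ (w : ℕ → ℝ), ∑ n ∈ Finset.Icc 1 (N+1), w n
          = ∑ n ∈ Finset.Icc 1 N, w n + w (N+1) :=
        fun w => Finset.sum_Icc_succ_top (by omega) w
      rw [hsp, ihn, hren (N+1) (by omega), hsp, hsp]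
      rw [show N+1-(N+1) = 0 by omega, hu0, ha0]
      have key : ∀ k ∈ Finset.Icc 1 N, g k * a (N+1-k)
          = g k * a (N-k) + g k * u (N+1-k) := by
        intro k hk
        simp only [Finset.mem_Icc] at hk
        rw [show N+1-k = (N-k)+1 by omega, hsucc, show (N-k)+1 = N+1-k by omega]
        ring
      rw [Finset.sum_congr rfl key, Finset.sum_add_distrib]
      ring
  -- tsum representation
  set φ : ℕ → ℕ → ℝ := fun N k => if k ∈ Finset.Icc 1 N then g k * (a (N-k) / N) else 0
    with hφdef
  have heq : ∀ N : ℕ, (1/(N:ℝ)) * ∑ n ∈ Finset.Icc 1 N, v n = ∑' k, φ N k := by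
    intro N
    rw [tsum_eq_sum (s := Finset.Icc 1 N) (fun b hb => by simp only [hφdef]; rw [if_neg hb]),
      hD N, Finset.mul_sum]
    refine Finset.sum_congr rfl fun k hk => ?_
    simp only [hφdef, if_pos hk]
    ring
  -- dominated convergence
  have h_sum : Summable (fun k => 2 * g k) := hg_sum.mul_left 2
  have hab : ∀ k : ℕ, Tendsto (fun N => φ N k) atTop (𝓝 (g k * (1/m))) := by
    intro k
    rcases Nat.eq_zero_or_pos k with rfl | hk
    · have h0 : ∀ N, φ N 0 = 0 := fun N => by simp [hφdef]
      rw [funext h0, hg0, zero_mul]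
      exact tendsto_const_nhds
    · have h2 : Tendsto (fun N : ℕ => a (N-k) / ((N-k : ℕ):ℝ)) atTop (𝓝 (1/m)) :=
        ha.comp (tendsto_sub_atTop_nat k)
      have h3 : Tendsto (fun N : ℕ => ((N-k : ℕ):ℝ)/N) atTop (𝓝 1) := by
        have h4 : Tendsto (fun N : ℕ => 1 - (k:ℝ) * (1/N)) atTop (𝓝 (1 - (k:ℝ) * 0)) :=
          tendsto_const_nhds.sub (tendsto_const_nhds.mul tendsto_one_div_atTop_nhds_zero_nat)
        rw [show (1:ℝ) - (k:ℝ) * 0 = 1 by ring] at h4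
        refine h4.congr' ?_
        filter_upwards [eventually_ge_atTop (k+1)] with N hN
        have hN0 : ((N:ℝ)) ≠ 0 := Nat.cast_ne_zero.2 (by omega)
        rw [Nat.cast_sub (by omega)]
        field_simp
      have h5 : Tendsto (fun N : ℕ => a (N-k) / ((N-k : ℕ):ℝ) * (((N-k : ℕ):ℝ)/N))
          atTop (𝓝 ((1/m) * 1)) := h2.mul h3
      rw [mul_one] at h5
      have h6 : Tendsto (fun N : ℕ => g k * (a (N-k) / (N:ℝ))) atTop (𝓝 (g k * (1/m))) := by
        refine tendsto_const_nhds.mul (h5.congr' ?_)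
        filter_upwards [eventually_ge_atTop (k+1)] with N hN
        have hM0 : (((N-k : ℕ)):ℝ) ≠ 0 := Nat.cast_ne_zero.2 (by omega)
        rw [div_mul_div_comm, mul_comm (a (N-k)) (((N-k : ℕ)):ℝ),
          mul_div_mul_left _ _ hM0]
      refine h6.congr' ?_
      filter_upwards [eventually_ge_atTop (k+1)] with N hN
      have hkN : k ∈ Finset.Icc 1 N := by simp; omega
      simp only [hφdef, if_pos hkN]
  have h_bound : ∀ᶠ N in atTop, ∀ k, ‖φ N k‖ ≤ 2 * g k := by
    filter_upwards [eventually_ge_atTop 1] with N hN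
    intro k
    by_cases hkN : k ∈ Finset.Icc 1 N
    · have hN0 : (0:ℝ) < N := by exact_mod_cast hN
      simp only [hφdef, if_pos hkN]
      simp only [Finset.mem_Icc] at hkN
      have hnn : 0 ≤ g k * (a (N-k) / N) :=
        mul_nonneg (hg_nn k) (div_nonneg (ha_nn _) (le_of_lt hN0))
      rw [Real.norm_eq_abs, abs_of_nonneg hnn]
      have hle : a (N-k) / N ≤ 2 := by
        rw [div_le_iff₀ hN0]
        have h7 := ha_le (N-k)
        have h8 : ((N-k : ℕ):ℝ) ≤ N := by exact_mod_cast Nat.sub_le N k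
        have h9 : (1:ℝ) ≤ N := by exact_mod_cast hN
        linarith
      nlinarith [hg_nn k]
    · simp only [hφdef, if_neg hkN, norm_zero]
      have := hg_nn k
      linarith
  have hmain := tendsto_tsum_of_dominated_convergence h_sum hab h_bound
  have hlimit : ∑' k, g k * (1/m) = fij / m := by
    rw [tsum_mul_right, hg_tsum]
    ring
  rw [hlimit] at hmain
  exact hmain.congr (fun N => (heq N).symm)

/-- If `j` is positive recurrent then the Cesàro averages of the `k`-step transition
probabilities into `j` tend to `f_{ij} / m_j`, for every starting state `i`. -/
theorem cesaro_kstep_tendsto_hitProb_div_meanReturn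
    {Ω : Type*} [MeasurableSpace Ω] [MeasurableSpace S] (μ : Measure Ω)
    (X : ℕ → Ω → S) (P : S → S → ℝ) (hMC : IsMarkovChain μ X P) (j : S)
    (hj : PositiveRecurrent P j) (i : S) :
    Tendsto (fun n : ℕ => (1 / (n : ℝ)) * ∑ k ∈ Finset.Icc 1 n, kstep P k i j)
      atTop (𝓝 (hitProb P i j / (meanReturn P j).toReal)) := by
  have hP0 := hMC.nonneg
  have hP1 := hMC.rowSum
  set m : ℝ := (meanReturn P j).toReal with hmdef
  have hmean := summable_mean hP0 hP1 j hj.2.ne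
  have hf_sum : Summable (fun n => fpass P j n j) := summable_fpass hP0 hP1 j j
  have hf_tsum : (∑' n, fpass P j n j) = 1 := hj.1
  have hg_tsum : (∑' n : ℕ, (n:ℝ) * fpass P j n j) = m := hmean.2
  have hterm : ∀ n : ℕ, fpass P j n j ≤ (n:ℝ) * fpass P j n j := by
    intro n
    match n with
    | 0 => simp [fpass]
    | (k+1) =>
      have h1 : (1:ℝ) ≤ ((k+1:ℕ):ℝ) := by
        exact_mod_cast Nat.one_le_iff_ne_zero.2 (Nat.succ_ne_zero k)
      nlinarith [fpass_nonneg hP0 hP1 (k+1) j j]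
  have hm1 : (1:ℝ) ≤ m := by
    calc (1:ℝ) = ∑' n, fpass P j n j := hf_tsum.symm
      _ ≤ ∑' n : ℕ, (n:ℝ) * fpass P j n j := Summable.tsum_le_tsum hterm hf_sum hmean.1
      _ = m := hg_tsum
  have hmpos : (0:ℝ) < m := by linarith
  have hcesaro := cesaro_renewal (fun n => kstep P n j j) (fun n => fpass P j n j) m
    (kstep_zero_self hP0 hP1 j) (fun n => kstep_le_one hP0 hP1 n j j)
    (fun n => kstep_nonneg hP0 hP1 n j j) (fpass_zero hP0 hP1 j j)
    (fun n => fpass_nonneg hP0 hP1 n j j) hf_sum hf_tsum hmean.1 hg_tsum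
    (fun n hn => renewalR hP0 hP1 j n hn j)
  have hfinal := cesaro_hit (fun n => kstep P n j j) (fun n => fpass P j n i) m
    (hitProb P i j) hmpos
    (kstep_zero_self hP0 hP1 j) (fun n => kstep_le_one hP0 hP1 n j j)
    (fun n => kstep_nonneg hP0 hP1 n j j) (fpass_zero hP0 hP1 i j)
    (fun n => fpass_nonneg hP0 hP1 n i j) (summable_fpass hP0 hP1 i j) rfl
    (fun n => kstep P n i j) (fun n hn => renewalR hP0 hP1 j n hn i) hcesaro
  exact hfinal
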